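/- arXiv:2303.16786 — 4 statements merged into one kernel-verified Lean document; each statement's English description precedes it below -/
import Mathlib

section
/- Let f : ℝⁿ → ℝ be μ-strongly convex and L-smooth, let X ⊆ ℝⁿ be nonempty, closed and convex, and let x* be the minimizer of f over X. Let 0 < t ≤ 1/L and define the projected gradient step T(x) = proj_X(x - t∇f(x)). Then the sequence x^{k+1} = T(x^k) satisfies ‖x^k - x*‖² ≤ (1 - tμ)^k ‖x^0 - x*‖² for all k ≥ 0. -/
/-!
Strong convexity makes the gradient `μ`-strongly monotone, and `L`-smoothness together with
convexity makes it `1/L`-cocoercive; for `t ≤ 1/L` the latter absorbs the `t²`-term in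
`‖(x - t∇f x) - (y - t∇f y)‖²`, so the gradient step contracts squared distances by `1 - tμ`.
The first-order optimality condition `⟪∇f x*, y - x*⟫ ≥ 0` on `X` says that `x*` is a fixed point
of the projected step, and projection onto a convex set is nonexpansive. Iterating gives the rate.
-/

open scoped RealInnerProductSpace

/-- `p` is the Euclidean projection of `z` onto the set `X`. -/
def IsProj {n : ℕ} (X : Set (EuclideanSpace ℝ (Fin n))) (z p : EuclideanSpace ℝ (Fin n)) : Prop :=
  p ∈ X ∧ ∀ y ∈ X, ‖p - z‖ ≤ ‖y - z‖

open Filter Asymptotics Topology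

section
variable {E : Type*} [NormedAddCommGroup E] [InnerProductSpace ℝ E]

def bregman (f : E → ℝ) (g : E → E) (x y : E) : ℝ := f x - f y - ⟪g y, x - y⟫

variable {f : E → ℝ} {g : E → E}

theorem bregman_add_bregman_swap (a b : E) :
    bregman f g a b + bregman f g b a = ⟪g a - g b, a - b⟫ := by
  simp only [bregman, inner_sub_left, inner_sub_right]
  ring

theorem hasFDerivAt_of_bregman_le {y : E} {L : ℝ} (h0 : ∀ x, 0 ≤ bregman f g x y)
    (hL : ∀ x, bregman f g x y ≤ L / 2 * ‖x - y‖ ^ 2) :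
    HasFDerivAt f (innerSL ℝ (g y)) y := by
  rw [hasFDerivAt_iff_isLittleO]
  have hsq : (fun x => ‖x - y‖ ^ 2) =o[𝓝 y] fun x => x - y :=
    (isLittleO_norm_pow_id one_lt_two).comp_tendsto
      (tendsto_sub_nhds_zero_iff.2 tendsto_id)
  refine IsBigO.trans_isLittleO (IsBigO.of_bound (L / 2) (Eventually.of_forall fun x => ?_)) hsq
  change ‖bregman f g x y‖ ≤ _
  rw [Real.norm_of_nonneg (h0 x), Real.norm_of_nonneg (by positivity)]
  exact hL x

theorem inner_gradient_nonneg_of_isMinOn {X : Set E} {xs y : E} (hX : Convex ℝ X)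
    (hmin : IsMinOn f X xs) (hxs : xs ∈ X) (hf : HasFDerivAt f (innerSL ℝ (g xs)) xs)
    (hy : y ∈ X) : 0 ≤ ⟪g xs, y - xs⟫ :=
  hmin.localize.hasFDerivWithinAt_nonneg hf.hasFDerivWithinAt
    (sub_mem_posTangentConeAt_of_segment_subset (hX.segment_subset hxs hy))

theorem mul_sq_norm_sub_le_inner_of_le_bregman {μ : ℝ}
    (hsc : ∀ x y, μ / 2 * ‖x - y‖ ^ 2 ≤ bregman f g x y) (a b : E) :
    μ * ‖a - b‖ ^ 2 ≤ ⟪g a - g b, a - b⟫ := by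
  have h₁ := hsc a b
  have h₂ := hsc b a
  rw [norm_sub_rev] at h₂
  linarith [bregman_add_bregman_swap (f := f) (g := g) a b]

theorem sq_norm_sub_le_bregman {L : ℝ} (hL : 0 < L) (h0 : ∀ x y, 0 ≤ bregman f g x y)
    (hsm : ∀ x y, bregman f g x y ≤ L / 2 * ‖x - y‖ ^ 2) (a b : E) :
    ‖g a - g b‖ ^ 2 ≤ 2 * L * bregman f g a b := by
  set d := g a - g b
  -- compare the values of `f` at `b`, `a` and the gradient step `a - L⁻¹ • d` from `a`
  have h₁ := h0 (a - L⁻¹ • d) b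
  have h₂ := hsm (a - L⁻¹ • d) a
  simp only [bregman, sub_sub_cancel_left, sub_right_comm a _ b, inner_sub_right, inner_neg_right,
    inner_smul_right, norm_neg, norm_smul, mul_pow, Real.norm_eq_abs, sq_abs] at h₁ h₂ ⊢
  have hd : ⟪g a, d⟫ - ⟪g b, d⟫ = ‖d‖ ^ 2 := by
    rw [← inner_sub_left, real_inner_self_eq_norm_sq]
  field_simp at h₁ h₂ ⊢
  nlinarith

theorem sq_norm_sub_le_mul_inner_of_bregman_le {L : ℝ} (hL : 0 < L)
    (h0 : ∀ x y, 0 ≤ bregman f g x y) (hsm : ∀ x y, bregman f g x y ≤ L / 2 * ‖x - y‖ ^ 2)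
    (a b : E) :
    ‖g a - g b‖ ^ 2 ≤ L * ⟪g a - g b, a - b⟫ := by
  have h₁ := sq_norm_sub_le_bregman hL h0 hsm a b
  have h₂ := sq_norm_sub_le_bregman hL h0 hsm b a
  rw [norm_sub_rev] at h₂
  rw [← bregman_add_bregman_swap]
  linarith

theorem le_of_bregman_bounds [Nontrivial E] {μ L : ℝ}
    (hsc : ∀ x y, μ / 2 * ‖x - y‖ ^ 2 ≤ bregman f g x y)
    (hsm : ∀ x y, bregman f g x y ≤ L / 2 * ‖x - y‖ ^ 2) : μ ≤ L := by
  obtain ⟨v, hv⟩ := exists_ne (0 : E)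
  have h := (hsc v 0).trans (hsm v 0)
  rw [sub_zero] at h
  have : 0 < ‖v‖ ^ 2 := by positivity
  nlinarith

theorem norm_sub_smul_sq_le {u v : E} {μ L t : ℝ} (hμ₀ : 0 ≤ μ) (ht : 0 ≤ t) (htL : t * L ≤ 1)
    (hμ : μ * ‖v‖ ^ 2 ≤ ⟪u, v⟫) (hL : ‖u‖ ^ 2 ≤ L * ⟪u, v⟫) :
    ‖v - t • u‖ ^ 2 ≤ (1 - t * μ) * ‖v‖ ^ 2 := by
  rw [norm_sub_sq_real, inner_smul_right, norm_smul, mul_pow, Real.norm_eq_abs, sq_abs,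
    real_inner_comm]
  have huv : 0 ≤ ⟪u, v⟫ := (by positivity : 0 ≤ μ * ‖v‖ ^ 2).trans hμ
  have h₁ := mul_le_mul_of_nonneg_left hL (sq_nonneg t)
  have h₂ := mul_nonneg (sub_nonneg.2 htL) (mul_nonneg ht huv)
  have h₃ := mul_le_mul_of_nonneg_left hμ ht
  nlinarith

theorem norm_sub_le_of_inner_le_zero {z w p q : E} (hp : ⟪z - p, q - p⟫ ≤ 0)
    (hq : ⟪w - q, p - q⟫ ≤ 0) : ‖p - q‖ ≤ ‖z - w‖ := by
  have hfirm : ‖p - q‖ ^ 2 ≤ ⟪z - w, p - q⟫ := by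
    have : ⟪z - w, p - q⟫ = ‖p - q‖ ^ 2 - ⟪z - p, q - p⟫ - ⟪w - q, p - q⟫ := by
      rw [← real_inner_self_eq_norm_sq]
      simp only [inner_sub_left, inner_sub_right, real_inner_comm]
      ring
    linarith
  have := hfirm.trans (real_inner_le_norm _ _)
  nlinarith [norm_nonneg (p - q), norm_nonneg (z - w)]

end

theorem IsProj.inner_sub_le_zero {n : ℕ} {X : Set (EuclideanSpace ℝ (Fin n))}
    {z p y : EuclideanSpace ℝ (Fin n)} (hX : Convex ℝ X) (hp : IsProj X z p) (hy : y ∈ X) :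
    ⟪z - p, y - p⟫ ≤ 0 := by
  have : Nonempty X := ⟨⟨p, hp.1⟩⟩
  refine (norm_eq_iInf_iff_real_inner_le_zero hX hp.1).1 (le_antisymm ?_ ?_) y hy
  · refine le_ciInf fun w => ?_
    rw [norm_sub_rev z p, norm_sub_rev z (w : EuclideanSpace ℝ (Fin n))]
    exact hp.2 w w.2
  · exact ciInf_le ⟨0, by rintro _ ⟨w, rfl⟩; exact norm_nonneg _⟩ (⟨p, hp.1⟩ : X)

theorem stmt0_general {n : ℕ} (f : EuclideanSpace ℝ (Fin n) → ℝ)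
    (g : EuclideanSpace ℝ (Fin n) → EuclideanSpace ℝ (Fin n))
    (X : Set (EuclideanSpace ℝ (Fin n)))
    (hXcv : Convex ℝ X)
    (μ L t : ℝ) (hμ : 0 < μ) (hL : 0 < L) (ht : 0 < t) (ht' : t ≤ 1 / L)
    (hsc : ∀ x y, μ / 2 * ‖x - y‖ ^ 2 ≤ f x - f y - ⟪g y, x - y⟫)
    (hsm : ∀ x y, f x - f y - ⟪g y, x - y⟫ ≤ L / 2 * ‖x - y‖ ^ 2)
    (xs : EuclideanSpace ℝ (Fin n)) (hxsX : xs ∈ X) (hxs : ∀ y ∈ X, f xs ≤ f y)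
    (x : ℕ → EuclideanSpace ℝ (Fin n))
    (hstep : ∀ k, IsProj X (x k - t • g (x k)) (x (k + 1))) :
    ∀ k, ‖x k - xs‖ ^ 2 ≤ (1 - t * μ) ^ k * ‖x 0 - xs‖ ^ 2 := by
  have hconv : ∀ x y, 0 ≤ bregman f g x y := fun x y => le_trans (by positivity) (hsc x y)
  have hopt : ∀ y ∈ X, 0 ≤ ⟪g xs, y - xs⟫ := fun y hy =>
    inner_gradient_nonneg_of_isMinOn hXcv (isMinOn_iff.2 hxs) hxsX
      (hasFDerivAt_of_bregman_le (hconv · xs) (hsm · xs)) hy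
  have htL : t * L ≤ 1 := (le_div_iff₀ hL).1 ht'
  have hcontract : ∀ k, ‖x (k + 1) - xs‖ ^ 2 ≤ (1 - t * μ) * ‖x k - xs‖ ^ 2 := by
    intro k
    -- `xs` is the projection of `xs - t • g xs`, so the projection step does not expand distances
    have hfix : ⟪(xs - t • g xs) - xs, x (k + 1) - xs⟫ ≤ 0 := by
      rw [sub_sub_cancel_left, inner_neg_left, inner_smul_left, RCLike.conj_to_real, neg_nonpos]
      exact mul_nonneg ht.le (hopt _ (hstep k).1)
    have hproj := norm_sub_le_of_inner_le_zero ((hstep k).inner_sub_le_zero hXcv hxsX) hfix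
    calc ‖x (k + 1) - xs‖ ^ 2 ≤ ‖(x k - t • g (x k)) - (xs - t • g xs)‖ ^ 2 := by gcongr
      _ = ‖(x k - xs) - t • (g (x k) - g xs)‖ ^ 2 := by rw [smul_sub]; abel_nf
      _ ≤ (1 - t * μ) * ‖x k - xs‖ ^ 2 :=
        norm_sub_smul_sq_le hμ.le ht.le htL (mul_sq_norm_sub_le_inner_of_le_bregman hsc _ _)
          (sq_norm_sub_le_mul_inner_of_bregman_le hL hconv hsm _ _)
  rcases subsingleton_or_nontrivial (EuclideanSpace ℝ (Fin n)) with _ | _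
  · intro k
    simp [Subsingleton.elim (x k) xs, Subsingleton.elim (x 0) xs]
  · have hμL := le_of_bregman_bounds hsc hsm
    have := mul_le_mul_of_nonneg_left hμL ht.le
    have : 0 ≤ 1 - t * μ := by linarith
    exact fun k => le_geom (u := fun k => ‖x k - xs‖ ^ 2) this k fun j _ => hcontract j

theorem stmt0 {n : ℕ} (f : EuclideanSpace ℝ (Fin n) → ℝ)
    (g : EuclideanSpace ℝ (Fin n) → EuclideanSpace ℝ (Fin n))
    (X : Set (EuclideanSpace ℝ (Fin n)))
    (hXne : X.Nonempty) (hXcl : IsClosed X) (hXcv : Convex ℝ X)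
    (μ L t : ℝ) (hμ : 0 < μ) (hL : 0 < L) (ht : 0 < t) (ht' : t ≤ 1 / L)
    (hsc : ∀ x y, μ / 2 * ‖x - y‖ ^ 2 ≤ f x - f y - ⟪g y, x - y⟫)
    (hsm : ∀ x y, f x - f y - ⟪g y, x - y⟫ ≤ L / 2 * ‖x - y‖ ^ 2)
    (xs : EuclideanSpace ℝ (Fin n)) (hxsX : xs ∈ X) (hxs : ∀ y ∈ X, f xs ≤ f y)
    (x : ℕ → EuclideanSpace ℝ (Fin n)) (hx0 : x 0 ∈ X)
    (hstep : ∀ k, IsProj X (x k - t • g (x k)) (x (k + 1))) :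
    ∀ k, ‖x k - xs‖ ^ 2 ≤ (1 - t * μ) ^ k * ‖x 0 - xs‖ ^ 2 :=
  stmt0_general f g X hXcv μ L t hμ hL ht ht' hsc hsm xs hxsX hxs x hstep
end

section
/- Let f : ℝⁿ → ℝ be convex and L-smooth, X ⊆ ℝⁿ nonempty closed convex, 0 < t ≤ 1/L, and T(x) = proj_X(x - t∇f(x)). Let x* be the minimizer of f over X. Then for every x ∈ X, ‖x - T(x)‖ ≤ 2‖x - x*‖. -/
/-!
Write `T = Tx`. The projection inequality at the admissible point `xs` gives
`⟪x - T, xs - T⟫ ≤ t ⟪g x, xs - T⟫`. Convexity at `xs`, the descent lemma at `T` and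
`f xs ≤ f T` bound `⟪g x, xs - T⟫` by `L/2 ‖x - T‖²`, so `t L ≤ 1` yields
`‖x - T‖² ≤ 2 ⟪x - T, x - xs⟫ ≤ 2 ‖x - T‖ ‖x - xs‖`.
-/

open scoped RealInnerProductSpace

section

variable {E : Type*} [NormedAddCommGroup E] [InnerProductSpace ℝ E]

theorem real_inner_sub_le_zero_of_forall_norm_sub_le {K : Set E} (hK : Convex ℝ K) {z p : E}
    (hp : p ∈ K) (hmin : ∀ y ∈ K, ‖p - z‖ ≤ ‖y - z‖) {y : E} (hy : y ∈ K) :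
    ⟪z - p, y - p⟫ ≤ 0 := by
  have : Nonempty K := ⟨⟨p, hp⟩⟩
  have hinf : ‖z - p‖ = ⨅ w : K, ‖z - w‖ :=
    (ciInf_eq_of_forall_ge_of_forall_gt_exists_lt
      (fun w => by simpa only [norm_sub_rev z] using hmin w w.2)
      (fun _ hlt => ⟨⟨p, hp⟩, hlt⟩)).symm
  exact (norm_eq_iInf_iff_real_inner_le_zero hK hp).mp hinf y hy

theorem norm_le_two_mul_norm_of_sq_le_two_mul_inner {u v : E} (h : ‖u‖ ^ 2 ≤ 2 * ⟪u, v⟫) :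
    ‖u‖ ≤ 2 * ‖v‖ := by
  have hcs : ‖u‖ * ‖u‖ ≤ ‖u‖ * (2 * ‖v‖) := by
    nlinarith [real_inner_le_norm u v]
  rcases (norm_nonneg u).eq_or_lt with hu | hu
  · rw [← hu]
    positivity
  · exact le_of_mul_le_mul_left hcs hu

variable {f : E → ℝ} {g : E → E} {L : ℝ}

theorem real_inner_grad_sub_le_of_le (hcv : ∀ x y, 0 ≤ f x - f y - ⟪g y, x - y⟫)
    (hsm : ∀ x y, f x - f y - ⟪g y, x - y⟫ ≤ L / 2 * ‖x - y‖ ^ 2) {x y z : E} (hyz : f y ≤ f z) :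
    ⟪g x, y - z⟫ ≤ L / 2 * ‖x - z‖ ^ 2 := by
  have hsplit : ⟪g x, y - z⟫ = ⟪g x, y - x⟫ - ⟪g x, z - x⟫ := by
    rw [← inner_sub_right, sub_sub_sub_cancel_right]
  rw [hsplit, norm_sub_rev]
  linarith [hcv y x, hsm z x]

theorem sq_norm_sub_le_two_mul_inner_of_projected_gradient
    (hcv : ∀ x y, 0 ≤ f x - f y - ⟪g y, x - y⟫)
    (hsm : ∀ x y, f x - f y - ⟪g y, x - y⟫ ≤ L / 2 * ‖x - y‖ ^ 2) {t : ℝ} (ht : 0 < t)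
    (htL : t * L ≤ 1) {x y T : E} (hproj : ⟪x - t • g x - T, y - T⟫ ≤ 0) (hyT : f y ≤ f T) :
    ‖x - T‖ ^ 2 ≤ 2 * ⟪x - T, x - y⟫ := by
  have hgrad := real_inner_grad_sub_le_of_le hcv hsm (x := x) hyT
  have hstep : t * ⟪g x, y - T⟫ ≤ ‖x - T‖ ^ 2 / 2 :=
    calc t * ⟪g x, y - T⟫ ≤ t * (L / 2 * ‖x - T‖ ^ 2) := mul_le_mul_of_nonneg_left hgrad ht.le
      _ = t * L * (‖x - T‖ ^ 2 / 2) := by ring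
      _ ≤ ‖x - T‖ ^ 2 / 2 := mul_le_of_le_one_left (by positivity) htL
  have hexpand : ⟪x - t • g x - T, y - T⟫ = ‖x - T‖ ^ 2 - ⟪x - T, x - y⟫ - t * ⟪g x, y - T⟫ := by
    rw [sub_right_comm, inner_sub_left, real_inner_smul_left,
      show y - T = (x - T) - (x - y) by abel, inner_sub_right, real_inner_self_eq_norm_sq]
  linarith

end

theorem stmt3_general {n : ℕ} (f : EuclideanSpace ℝ (Fin n) → ℝ)
    (g : EuclideanSpace ℝ (Fin n) → EuclideanSpace ℝ (Fin n))
    (X : Set (EuclideanSpace ℝ (Fin n)))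
    (hXcv : Convex ℝ X)
    (L t : ℝ) (ht : 0 < t) (ht' : t ≤ 1 / L)
    (hcv : ∀ x y, 0 ≤ f x - f y - ⟪g y, x - y⟫)
    (hsm : ∀ x y, f x - f y - ⟪g y, x - y⟫ ≤ L / 2 * ‖x - y‖ ^ 2)
    (xs : EuclideanSpace ℝ (Fin n)) (hxsX : xs ∈ X) (hxs : ∀ y ∈ X, f xs ≤ f y) :
    ∀ x ∈ X, ∀ Tx : EuclideanSpace ℝ (Fin n),
      IsProj X (x - t • g x) Tx → ‖x - Tx‖ ≤ 2 * ‖x - xs‖ := by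
  rintro x - Tx ⟨hTX, hTmin⟩
  have hL : 0 < L := one_div_pos.mp (ht.trans_le ht')
  have htL : t * L ≤ 1 := (le_div_iff₀ hL).mp ht'
  have hproj := real_inner_sub_le_zero_of_forall_norm_sub_le hXcv hTX hTmin hxsX
  exact norm_le_two_mul_norm_of_sq_le_two_mul_inner
    (sq_norm_sub_le_two_mul_inner_of_projected_gradient hcv hsm ht htL hproj (hxs Tx hTX))

theorem stmt3 {n : ℕ} (f : EuclideanSpace ℝ (Fin n) → ℝ)
    (g : EuclideanSpace ℝ (Fin n) → EuclideanSpace ℝ (Fin n))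
    (X : Set (EuclideanSpace ℝ (Fin n)))
    (hXne : X.Nonempty) (hXcl : IsClosed X) (hXcv : Convex ℝ X)
    (L t : ℝ) (hL : 0 < L) (ht : 0 < t) (ht' : t ≤ 1 / L)
    (hcv : ∀ x y, 0 ≤ f x - f y - ⟪g y, x - y⟫)
    (hsm : ∀ x y, f x - f y - ⟪g y, x - y⟫ ≤ L / 2 * ‖x - y‖ ^ 2)
    (xs : EuclideanSpace ℝ (Fin n)) (hxsX : xs ∈ X) (hxs : ∀ y ∈ X, f xs ≤ f y) :
    ∀ x ∈ X, ∀ Tx : EuclideanSpace ℝ (Fin n),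
      IsProj X (x - t • g x) Tx → ‖x - Tx‖ ≤ 2 * ‖x - xs‖ :=
  stmt3_general f g X hXcv L t ht ht' hcv hsm xs hxsX hxs
end

section
/- Let f : ℝⁿ → ℝ be convex and L-smooth, X nonempty closed convex, 0 < t ≤ 1/L, T(x) = proj_X(x - t∇f(x)), and x* = argmin_{x∈X} f(x). Then for every x ∈ X, (1/2)‖x - T(x)‖² ≤ ⟨x - T(x), x - x*⟩. -/
/-! The variational inequality of the projection gives
`⟪x - T x, x⋆ - T x⟫ ≤ t ⟪∇f x, x⋆ - T x⟫`. Splitting `x⋆ - T x` through `x`, convexity bounds `⟪∇f x, x⋆ - x⟫` by `f x⋆ - f x` and smoothness bounds `⟪∇f x, x - T x⟫` by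
`f x - f (T x) + L/2 ‖x - T x‖²`; since `x⋆` minimises `f` on `X`, the right-hand side is at most
`t L/2 ‖x - T x‖² ≤ ½ ‖x - T x‖²`, which rearranges to the claim. -/

open scoped RealInnerProductSpace

theorem IsProj.inner_sub_nonpos {n : ℕ} {X : Set (EuclideanSpace ℝ (Fin n))}
    {z p : EuclideanSpace ℝ (Fin n)} (hX : Convex ℝ X) (hp : IsProj X z p)
    {y : EuclideanSpace ℝ (Fin n)} (hy : y ∈ X) : ⟪z - p, y - p⟫ ≤ 0 := by
  obtain ⟨hpX, hmin⟩ := hp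
  have : Nonempty X := ⟨⟨p, hpX⟩⟩
  have hinf : ‖z - p‖ = ⨅ w : X, ‖z - w‖ := by
    refine le_antisymm (le_ciInf fun w => ?_) (ciInf_le ⟨0, ?_⟩ (⟨p, hpX⟩ : X))
    · simpa only [norm_sub_rev z] using hmin w w.2
    · rintro r ⟨w, rfl⟩
      exact norm_nonneg _
  exact (norm_eq_iInf_iff_real_inner_le_zero hX hpX).mp hinf y hy

theorem inner_grad_sub_le_of_le {E : Type*} [NormedAddCommGroup E] [InnerProductSpace ℝ E]
    {f : E → ℝ} {g : E → E} {L : ℝ}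
    (hcv : ∀ x y, 0 ≤ f x - f y - ⟪g y, x - y⟫)
    (hsm : ∀ x y, f x - f y - ⟪g y, x - y⟫ ≤ L / 2 * ‖x - y‖ ^ 2)
    (x : E) {y z : E} (hyz : f y ≤ f z) : ⟪g x, y - z⟫ ≤ L / 2 * ‖x - z‖ ^ 2 := by
  have hsplit : ⟪g x, y - z⟫ = ⟪g x, y - x⟫ - ⟪g x, z - x⟫ := by
    rw [← inner_sub_right, sub_sub_sub_cancel_right]
  have hconv := hcv y x
  have hsmooth := hsm z x
  rw [norm_sub_rev] at hsmooth
  linarith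

theorem stmt4_general {n : ℕ} (f : EuclideanSpace ℝ (Fin n) → ℝ)
    (g : EuclideanSpace ℝ (Fin n) → EuclideanSpace ℝ (Fin n))
    (X : Set (EuclideanSpace ℝ (Fin n)))
    (hXcv : Convex ℝ X)
    (L t : ℝ) (hL : 0 < L) (ht : 0 < t) (ht' : t ≤ 1 / L)
    (hcv : ∀ x y, 0 ≤ f x - f y - ⟪g y, x - y⟫)
    (hsm : ∀ x y, f x - f y - ⟪g y, x - y⟫ ≤ L / 2 * ‖x - y‖ ^ 2)
    (xs : EuclideanSpace ℝ (Fin n)) (hxsX : xs ∈ X) (hxs : ∀ y ∈ X, f xs ≤ f y) :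
    ∀ x ∈ X, ∀ Tx : EuclideanSpace ℝ (Fin n),
      IsProj X (x - t • g x) Tx → 1 / 2 * ‖x - Tx‖ ^ 2 ≤ ⟪x - Tx, x - xs⟫ := by
  intro x _ Tx hT
  have hvar : ⟪x - Tx, xs - Tx⟫ ≤ t * ⟪g x, xs - Tx⟫ := by
    have h := hT.inner_sub_nonpos hXcv hxsX
    rwa [sub_right_comm, inner_sub_left, real_inner_smul_left, sub_nonpos] at h
  have hgrad := inner_grad_sub_le_of_le hcv hsm x (hxs Tx hT.1)
  have htL : t * L ≤ 1 := (le_div_iff₀ hL).mp ht'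
  have hsplit : ⟪x - Tx, x - xs⟫ = ‖x - Tx‖ ^ 2 - ⟪x - Tx, xs - Tx⟫ := by
    rw [← real_inner_self_eq_norm_sq, ← inner_sub_right, sub_sub_sub_cancel_right]
  have hsq := sq_nonneg ‖x - Tx‖
  rw [hsplit]
  nlinarith [mul_le_mul_of_nonneg_left hgrad ht.le, mul_le_mul_of_nonneg_right htL hsq]

theorem stmt4 {n : ℕ} (f : EuclideanSpace ℝ (Fin n) → ℝ)
    (g : EuclideanSpace ℝ (Fin n) → EuclideanSpace ℝ (Fin n))
    (X : Set (EuclideanSpace ℝ (Fin n)))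
    (hXne : X.Nonempty) (hXcl : IsClosed X) (hXcv : Convex ℝ X)
    (L t : ℝ) (hL : 0 < L) (ht : 0 < t) (ht' : t ≤ 1 / L)
    (hcv : ∀ x y, 0 ≤ f x - f y - ⟪g y, x - y⟫)
    (hsm : ∀ x y, f x - f y - ⟪g y, x - y⟫ ≤ L / 2 * ‖x - y‖ ^ 2)
    (xs : EuclideanSpace ℝ (Fin n)) (hxsX : xs ∈ X) (hxs : ∀ y ∈ X, f xs ≤ f y) :
    ∀ x ∈ X, ∀ Tx : EuclideanSpace ℝ (Fin n),
      IsProj X (x - t • g x) Tx → 1 / 2 * ‖x - Tx‖ ^ 2 ≤ ⟪x - Tx, x - xs⟫ :=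
  stmt4_general f g X hXcv L t hL ht ht' hcv hsm xs hxsX hxs
end

section
/- Let f : ℝⁿ → ℝ be μ-strongly convex and L-smooth, X nonempty closed convex, x* = argmin_{x∈X} f(x), 0 < t ≤ 1/L, and Ω ≥ 0, ε > 0 with 4Ω < ε t μ. Suppose a sequence {x^k} ⊆ X satisfies x^{k+1} = proj_X(x^k - ĝ^k) where ‖t∇f(x^k) - ĝ^k‖ ≤ Ω for all k. Then as long as ‖x^{j+1} - x*‖ ≥ ε/2 for all j < k, it holds that ‖x^k - x*‖² ≤ ((1 - tμ)/(1 - 4Ω/ε))^k ‖x^0 - x*‖². -/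
open scoped RealInnerProductSpace

/-!
Write `r k = ‖x k - x*‖`. The variational inequality of the projection, tested at `x*`, together
with the lower (strong convexity) model of `f` at `x k` evaluated at `x*`, the upper (smoothness)
model at `x k` evaluated at `x (k+1)`, and `f x* ≤ f (x (k+1))`, gives
`r (k+1)² ≤ 2Ω r (k+1) + (1 - tμ) r k²`, the error `t∇f - ĝ` costing only the linear term.
While `r (k+1) ≥ ε/2`, that term is at most `(4Ω/ε) r (k+1)²`, so it is absorbed into the left
side, leaving a geometric decay with ratio `(1 - tμ)/(1 - 4Ω/ε)`.
-/

section InnerProductSpace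

variable {E : Type*} [NormedAddCommGroup E] [InnerProductSpace ℝ E]

theorem inner_sub_le_zero_of_forall_norm_le {K : Set E} (hK : Convex ℝ K) {z p : E} (hp : p ∈ K)
    (hmin : ∀ y ∈ K, ‖p - z‖ ≤ ‖y - z‖) {w : E} (hw : w ∈ K) : ⟪z - p, w - p⟫ ≤ 0 := by
  have : Nonempty K := ⟨⟨p, hp⟩⟩
  have hinf : ‖z - p‖ = ⨅ y : K, ‖z - y‖ := by
    refine le_antisymm (le_ciInf fun y => ?_) (ciInf_le ?_ (⟨p, hp⟩ : K))
    · rw [norm_sub_rev z, norm_sub_rev z]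
      exact hmin y y.2
    · exact ⟨0, Set.forall_mem_range.2 fun _ => norm_nonneg _⟩
  exact (norm_eq_iInf_iff_real_inner_le_zero hK hp).1 hinf w hw

variable {f : E → ℝ} {g : E → E} {μ L : ℝ}

theorem le_of_stronglyConvex_of_smooth [Nontrivial E]
    (hsc : ∀ x y, μ / 2 * ‖x - y‖ ^ 2 ≤ f x - f y - ⟪g y, x - y⟫)
    (hsm : ∀ x y, f x - f y - ⟪g y, x - y⟫ ≤ L / 2 * ‖x - y‖ ^ 2) : μ ≤ L := by
  obtain ⟨v, hv⟩ := exists_ne (0 : E)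
  have hpos : 0 < ‖v - 0‖ ^ 2 := by rw [sub_zero]; positivity
  nlinarith [hsc v 0, hsm v 0]

theorem inner_gradient_sub_le_of_le {a b xs : E}
    (hsc : ∀ x y, μ / 2 * ‖x - y‖ ^ 2 ≤ f x - f y - ⟪g y, x - y⟫)
    (hsm : ∀ x y, f x - f y - ⟪g y, x - y⟫ ≤ L / 2 * ‖x - y‖ ^ 2) (hf : f xs ≤ f b) :
    ⟪g a, xs - b⟫ ≤ -(μ / 2) * ‖a - xs‖ ^ 2 + L / 2 * ‖a - b‖ ^ 2 := by
  have hsplit : ⟪g a, xs - b⟫ = ⟪g a, xs - a⟫ - ⟪g a, b - a⟫ := by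
    rw [← inner_sub_right, sub_sub_sub_cancel_right]
  rw [hsplit, norm_sub_rev a xs, norm_sub_rev a b]
  linarith [hsc xs a, hsm b a]

/-- One step `b = proj (a - d)` of inexact projected gradient descent, with `d ≈ t • g a`. -/
theorem norm_sub_sq_le_of_inexact_gradient_step {a b d xs : E} {t Ω : ℝ}
    (hsc : ∀ x y, μ / 2 * ‖x - y‖ ^ 2 ≤ f x - f y - ⟪g y, x - y⟫)
    (hsm : ∀ x y, f x - f y - ⟪g y, x - y⟫ ≤ L / 2 * ‖x - y‖ ^ 2)
    (ht : 0 < t) (htL : t * L ≤ 1) (herr : ‖t • g a - d‖ ≤ Ω)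
    (hvi : ⟪a - d - b, xs - b⟫ ≤ 0) (hf : f xs ≤ f b) :
    ‖b - xs‖ ^ 2 ≤ 2 * Ω * ‖b - xs‖ + (1 - t * μ) * ‖a - xs‖ ^ 2 := by
  have hdec : ⟪a - d - b, xs - b⟫ =
      ⟪a - b, xs - b⟫ - t * ⟪g a, xs - b⟫ + ⟪t • g a - d, xs - b⟫ := by
    rw [← real_inner_smul_left, ← inner_sub_left, ← inner_add_left]
    congr 1
    abel
  have hpol : 2 * ⟪a - b, xs - b⟫ = ‖a - b‖ ^ 2 + ‖b - xs‖ ^ 2 - ‖a - xs‖ ^ 2 := by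
    have h := norm_sub_sq_real (a - b) (xs - b)
    rw [sub_sub_sub_cancel_right, norm_sub_rev xs b] at h
    linarith
  have hnoise : -(Ω * ‖b - xs‖) ≤ ⟪t • g a - d, xs - b⟫ := by
    have h := neg_le_of_abs_le (abs_real_inner_le_norm (t • g a - d) (xs - b))
    rw [norm_sub_rev xs b] at h
    linarith [mul_le_mul_of_nonneg_right herr (norm_nonneg (b - xs))]
  have hgrad := mul_le_mul_of_nonneg_left (inner_gradient_sub_le_of_le (a := a) hsc hsm hf) ht.le
  have hshort := mul_le_mul_of_nonneg_right htL (sq_nonneg ‖a - b‖)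
  linarith

end InnerProductSpace

theorem sq_le_div_mul_of_sq_le_two_mul_add {r q s Ω ε : ℝ} (hΩ : 0 ≤ Ω) (hε : 0 < ε)
    (hden : 0 < 1 - 4 * Ω / ε) (hr : ε / 2 ≤ r) (h : r ^ 2 ≤ 2 * Ω * r + q * s) :
    r ^ 2 ≤ q / (1 - 4 * Ω / ε) * s := by
  have habsorb : 2 * Ω * r ≤ 4 * Ω / ε * r ^ 2 := by
    have h2Ω : 2 * Ω = 4 * Ω / ε * (ε / 2) := by field_simp; ring
    rw [h2Ω, mul_assoc, sq]
    gcongr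
    linarith
  rw [div_mul_eq_mul_div, le_div_iff₀ hden]
  linarith

theorem stmt8_general {n : ℕ} (f : EuclideanSpace ℝ (Fin n) → ℝ)
    (g : EuclideanSpace ℝ (Fin n) → EuclideanSpace ℝ (Fin n))
    (X : Set (EuclideanSpace ℝ (Fin n)))
    (hXcv : Convex ℝ X)
    (μ L t Ω ε : ℝ) (hL : 0 < L) (ht : 0 < t) (ht' : t ≤ 1 / L)
    (hΩ : 0 ≤ Ω) (hε : 0 < ε) (hΩε : 4 * Ω < ε * t * μ)
    (hsc : ∀ x y, μ / 2 * ‖x - y‖ ^ 2 ≤ f x - f y - ⟪g y, x - y⟫)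
    (hsm : ∀ x y, f x - f y - ⟪g y, x - y⟫ ≤ L / 2 * ‖x - y‖ ^ 2)
    (xs : EuclideanSpace ℝ (Fin n)) (hxsX : xs ∈ X) (hxs : ∀ y ∈ X, f xs ≤ f y)
    (x : ℕ → EuclideanSpace ℝ (Fin n))
    (gh : ℕ → EuclideanSpace ℝ (Fin n))
    (hgerr : ∀ k, ‖t • g (x k) - gh k‖ ≤ Ω)
    (hstep : ∀ k, IsProj X (x k - gh k) (x (k + 1))) :
    ∀ k, (∀ j < k, ε / 2 ≤ ‖x (j + 1) - xs‖) →
      ‖x k - xs‖ ^ 2 ≤ ((1 - t * μ) / (1 - 4 * Ω / ε)) ^ k * ‖x 0 - xs‖ ^ 2 := by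
  intro k hfar
  rcases subsingleton_or_nontrivial (EuclideanSpace ℝ (Fin n)) with _ | _
  · simp [Subsingleton.elim (x k) xs, Subsingleton.elim (x 0) xs]
  have htL : t * L ≤ 1 := by rwa [le_div_iff₀ hL] at ht'
  have htμ : t * μ ≤ 1 := le_trans (by gcongr; exact le_of_stronglyConvex_of_smooth hsc hsm) htL
  have hden : 0 < 1 - 4 * Ω / ε := by
    have : 4 * Ω / ε < t * μ := by rw [div_lt_iff₀ hε]; linarith
    linarith
  refine le_geom (u := fun k => ‖x k - xs‖ ^ 2) (div_nonneg (sub_nonneg.2 htμ) hden.le) k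
    fun j hj => ?_
  refine sq_le_div_mul_of_sq_le_two_mul_add hΩ hε hden (hfar j hj) ?_
  exact norm_sub_sq_le_of_inexact_gradient_step hsc hsm ht htL (hgerr j)
    (inner_sub_le_zero_of_forall_norm_le hXcv (hstep j).1 (hstep j).2 hxsX)
    (hxs _ (hstep j).1)

theorem stmt8 {n : ℕ} (f : EuclideanSpace ℝ (Fin n) → ℝ)
    (g : EuclideanSpace ℝ (Fin n) → EuclideanSpace ℝ (Fin n))
    (X : Set (EuclideanSpace ℝ (Fin n)))
    (hXne : X.Nonempty) (hXcl : IsClosed X) (hXcv : Convex ℝ X)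
    (μ L t Ω ε : ℝ) (hμ : 0 < μ) (hL : 0 < L) (ht : 0 < t) (ht' : t ≤ 1 / L)
    (hΩ : 0 ≤ Ω) (hε : 0 < ε) (hΩε : 4 * Ω < ε * t * μ)
    (hsc : ∀ x y, μ / 2 * ‖x - y‖ ^ 2 ≤ f x - f y - ⟪g y, x - y⟫)
    (hsm : ∀ x y, f x - f y - ⟪g y, x - y⟫ ≤ L / 2 * ‖x - y‖ ^ 2)
    (xs : EuclideanSpace ℝ (Fin n)) (hxsX : xs ∈ X) (hxs : ∀ y ∈ X, f xs ≤ f y)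
    (x : ℕ → EuclideanSpace ℝ (Fin n)) (hx0 : x 0 ∈ X)
    (gh : ℕ → EuclideanSpace ℝ (Fin n))
    (hgerr : ∀ k, ‖t • g (x k) - gh k‖ ≤ Ω)
    (hstep : ∀ k, IsProj X (x k - gh k) (x (k + 1))) :
    ∀ k, (∀ j < k, ε / 2 ≤ ‖x (j + 1) - xs‖) →
      ‖x k - xs‖ ^ 2 ≤ ((1 - t * μ) / (1 - 4 * Ω / ε)) ^ k * ‖x 0 - xs‖ ^ 2 :=
  stmt8_general f g X hXcv μ L t Ω ε hL ht ht' hΩ hε hΩε hsc hsm xs hxsX hxs x gh hgerr hstep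
end
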